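/- arXiv:2504.03390 — 4 statements merged into one kernel-verified Lean document; each statement's English description precedes it below -/
import Mathlib

section
/- Suppose (H, c, ν) satisfies the Marchenko–Pastur relation. Then 𝔻_{H,c}(∞) = φ_{ν,c}(ℂ⁺); consequently Φ_{H,c} maps 𝔻_{H,c}(∞) bijectively onto ℂ⁺, with inverse function φ_{ν,c}. -/
open MeasureTheory Filter Complex Set

noncomputable section

/-- The Stieltjes transform of a measure on `ℝ`. -/
def St (μ : Measure ℝ) (z : ℂ) : ℂ := ∫ l, ((l : ℂ) - z)⁻¹ ∂μ

/-- The (topological) support of a measure on `ℝ`. -/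
def msupport (μ : Measure ℝ) : Set ℝ := {x : ℝ | ∀ U ∈ nhds x, 0 < μ U}

/-- `(H, c, ν)` satisfies the Marchenko–Pastur relation. -/
def MPRel (H : Measure ℝ) (c : ℝ) (ν : Measure ℝ) : Prop :=
  IsProbabilityMeasure H ∧ H ≠ Measure.dirac 0 ∧
  IsCompact (msupport H) ∧ msupport H ⊆ Set.Ici 0 ∧
  0 < c ∧
  IsProbabilityMeasure ν ∧ ν ≠ Measure.dirac 0 ∧
  IsCompact (msupport ν) ∧ msupport ν ⊆ Set.Ici 0 ∧
  ∀ z : ℂ, 0 < z.im →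
    St ν z = (∫ l, ((l : ℂ) * (1 - (c : ℂ) * z * St ν z - (c : ℂ)) - z)⁻¹ ∂H) ∧
    0 < ((c : ℂ) * St ν z + ((c : ℂ) - 1) / z).im

/-- The map `Φ_{H,c}`. -/
def Phi (H : Measure ℝ) (c : ℝ) (z : ℂ) : ℂ := (1 - (c : ℂ) * z * St H z - (c : ℂ)) * z

/-- The spectral domain `𝔻_{H,c}(∞)`. -/
def Dinf (H : Measure ℝ) (c : ℝ) : Set ℂ := {z : ℂ | 0 < z.im ∧ 0 < (Phi H c z).im}

/-- The companion transform `s_ν̲`. -/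
def sUnder (ν : Measure ℝ) (c : ℝ) (z : ℂ) : ℂ := (c : ℂ) * St ν z - (1 - (c : ℂ)) / z

/-- The map `φ_{ν,c}`. -/
def phiInv (ν : Measure ℝ) (c : ℝ) (z : ℂ) : ℂ := -1 / sUnder ν c z

end

/-!
With `g_w(x) = x / (x - w)` one has `Φ(w) = w (1 - c ∫ g_w dH)`, hence
`Im Φ(w) = Im w · (1 - c ∫ |g_w|² dH)` and
`Φ(w₁) - Φ(w₂) = (w₁ - w₂) (1 - c ∫ g_{w₁} g_{w₂} dH)`.
On `𝔻` both `c ∫ |g_{wᵢ}|² dH` are `< 1`, so by AM-GM `|c ∫ g_{w₁} g_{w₂} dH| < 1` and `Φ` is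
injective there. The Marchenko–Pastur equation says `s_H(φ(z)) = -z s̲(z) s_ν(z)`, which gives
`Φ(φ(z)) = z`, and `Im φ(z) > 0` because `Im s̲(z) > 0`; a right inverse of an injective map is
two-sided.
-/

section UpperHalfPlane

variable {w : ℂ}

lemma ofReal_sub_ne_zero_of_im_pos (hw : 0 < w.im) (x : ℝ) : (x : ℂ) - w ≠ 0 :=
  fun h => hw.ne' (by simpa using congrArg im h)

lemma continuous_ofReal_div_sub (hw : 0 < w.im) : Continuous fun x : ℝ => (x : ℂ) / (x - w) :=
  continuous_ofReal.div (continuous_ofReal.sub continuous_const)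
    (ofReal_sub_ne_zero_of_im_pos hw)

lemma norm_ofReal_div_sub_le (hw : 0 < w.im) (x : ℝ) :
    ‖(x : ℂ) / (x - w)‖ ≤ 1 + ‖w‖ / w.im := by
  have hne := ofReal_sub_ne_zero_of_im_pos hw x
  have him_le : w.im ≤ ‖(x : ℂ) - w‖ := by
    simpa [abs_of_pos hw] using abs_im_le_norm ((x : ℂ) - w)
  calc ‖(x : ℂ) / (x - w)‖ = ‖1 + w / (x - w)‖ := by congr 1; field_simp; ring
    _ ≤ 1 + ‖w‖ / ‖(x : ℂ) - w‖ := by simpa [norm_div] using norm_add_le (1 : ℂ) (w / (x - w))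
    _ ≤ 1 + ‖w‖ / w.im := by gcongr

lemma im_mul_ofReal_div_sub (x : ℝ) :
    (w * ((x : ℂ) / (x - w))).im = w.im * ‖(x : ℂ) / (x - w)‖ ^ 2 := by
  rw [mul_div_assoc', div_im, norm_div, div_pow, norm_real, Real.norm_eq_abs, sq_abs,
    ← normSq_eq_norm_sq]
  simp only [mul_re, mul_im, ofReal_re, ofReal_im, sub_re, sub_im]
  ring

end UpperHalfPlane

section Integrability

variable {μ : Measure ℝ} [IsFiniteMeasure μ] {w w₁ w₂ : ℂ}

lemma integrable_ofReal_div_sub (hw : 0 < w.im) :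
    Integrable (fun x : ℝ => (x : ℂ) / (x - w)) μ :=
  .of_bound (continuous_ofReal_div_sub hw).aestronglyMeasurable _
    (.of_forall (norm_ofReal_div_sub_le hw))

lemma integrable_ofReal_div_sub_mul (hw₁ : 0 < w₁.im) (hw₂ : 0 < w₂.im) :
    Integrable (fun x : ℝ => (x : ℂ) / (x - w₁) * ((x : ℂ) / (x - w₂))) μ :=
  (integrable_ofReal_div_sub hw₂).bdd_mul (continuous_ofReal_div_sub hw₁).aestronglyMeasurable
    (.of_forall (norm_ofReal_div_sub_le hw₁))

lemma integrable_norm_ofReal_div_sub_sq (hw : 0 < w.im) :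
    Integrable (fun x : ℝ => ‖(x : ℂ) / (x - w)‖ ^ 2) μ := by
  simpa only [norm_mul, sq] using (integrable_ofReal_div_sub_mul (μ := μ) hw hw).norm

end Integrability

lemma norm_integral_mul_le_half_add {α E : Type*} [MeasurableSpace α] {μ : Measure α}
    [NormedRing E] [NormedSpace ℝ E] {f g : α → E}
    (hf : Integrable (fun x => ‖f x‖ ^ 2) μ) (hg : Integrable (fun x => ‖g x‖ ^ 2) μ) :
    ‖∫ x, f x * g x ∂μ‖ ≤ ((∫ x, ‖f x‖ ^ 2 ∂μ) + ∫ x, ‖g x‖ ^ 2 ∂μ) / 2 := by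
  have hamgm : ∀ x, ‖f x * g x‖ ≤ (‖f x‖ ^ 2 + ‖g x‖ ^ 2) / 2 := fun x => by
    have := two_mul_le_add_sq ‖f x‖ ‖g x‖
    have := norm_mul_le (f x) (g x)
    linarith
  calc ‖∫ x, f x * g x ∂μ‖ ≤ ∫ x, ‖f x * g x‖ ∂μ := norm_integral_le_integral_norm _
    _ ≤ ∫ x, (‖f x‖ ^ 2 + ‖g x‖ ^ 2) / 2 ∂μ :=
      integral_mono_of_nonneg (.of_forall fun x => norm_nonneg _) ((hf.add hg).div_const 2)
        (.of_forall hamgm)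
    _ = ((∫ x, ‖f x‖ ^ 2 ∂μ) + ∫ x, ‖g x‖ ^ 2 ∂μ) / 2 := by
      rw [integral_div, integral_add hf hg]

section PhiFormulas

variable {H : Measure ℝ} [IsProbabilityMeasure H] {c : ℝ} {w w₁ w₂ : ℂ}

lemma Phi_eq_mul (hw : 0 < w.im) :
    Phi H c w = w * (1 - c * ∫ x, (x : ℂ) / (x - w) ∂H) := by
  have hpt : ∀ x : ℝ, w * ((x : ℂ) - w)⁻¹ = (x : ℂ) / (x - w) - 1 := fun x => by
    have := ofReal_sub_ne_zero_of_im_pos hw x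
    field_simp
    ring
  have hwSt : w * St H w = (∫ x, (x : ℂ) / (x - w) ∂H) - 1 := by
    rw [St, ← integral_const_mul, funext hpt,
      integral_sub (integrable_ofReal_div_sub hw) (integrable_const 1), integral_const,
      probReal_univ, one_smul]
  rw [Phi]
  linear_combination (-(c : ℂ) * w) * hwSt

lemma Phi_eq_sub_integral (hw : 0 < w.im) :
    Phi H c w = w - c * ∫ x, w * ((x : ℂ) / (x - w)) ∂H := by
  rw [Phi_eq_mul hw, integral_const_mul]
  ring

lemma im_Phi (hw : 0 < w.im) :
    (Phi H c w).im = w.im * (1 - c * ∫ x, ‖(x : ℂ) / (x - w)‖ ^ 2 ∂H) := by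
  have hint : (∫ x, w * ((x : ℂ) / (x - w)) ∂H).im = w.im * ∫ x, ‖(x : ℂ) / (x - w)‖ ^ 2 ∂H := by
    rw [← integral_const_mul, ← RCLike.im_to_complex,
      ← integral_im ((integrable_ofReal_div_sub hw).const_mul w)]
    exact integral_congr_ae (.of_forall fun x => im_mul_ofReal_div_sub x)
  rw [Phi_eq_sub_integral hw, sub_im, im_ofReal_mul, hint]
  ring

lemma Phi_sub_Phi (hw₁ : 0 < w₁.im) (hw₂ : 0 < w₂.im) :
    Phi H c w₁ - Phi H c w₂ =
      (w₁ - w₂) * (1 - c * ∫ x, (x : ℂ) / (x - w₁) * ((x : ℂ) / (x - w₂)) ∂H) := by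
  have hpt : ∀ x : ℝ, w₁ * ((x : ℂ) / (x - w₁)) - w₂ * ((x : ℂ) / (x - w₂)) =
      (w₁ - w₂) * ((x : ℂ) / (x - w₁) * ((x : ℂ) / (x - w₂))) := fun x => by
    have := ofReal_sub_ne_zero_of_im_pos hw₁ x
    have := ofReal_sub_ne_zero_of_im_pos hw₂ x
    field_simp
    ring
  have hint := integral_sub ((integrable_ofReal_div_sub (μ := H) hw₁).const_mul w₁)
    ((integrable_ofReal_div_sub hw₂).const_mul w₂)
  rw [funext hpt, integral_const_mul] at hint
  rw [Phi_eq_sub_integral hw₁, Phi_eq_sub_integral hw₂]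
  linear_combination (-(c : ℂ)) * hint.symm

lemma mem_Dinf_iff : w ∈ Dinf H c ↔ 0 < w.im ∧ c * ∫ x, ‖(x : ℂ) / (x - w)‖ ^ 2 ∂H < 1 := by
  refine and_congr_right fun hw => ?_
  rw [im_Phi hw, mul_pos_iff_of_pos_left hw, sub_pos]

lemma injOn_Phi (hc : 0 ≤ c) : InjOn (Phi H c) (Dinf H c) := by
  intro w₁ h₁ w₂ h₂ heq
  obtain ⟨hw₁, hlt₁⟩ := mem_Dinf_iff.mp h₁
  obtain ⟨hw₂, hlt₂⟩ := mem_Dinf_iff.mp h₂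
  by_contra hne
  have hdiff := Phi_sub_Phi (H := H) (c := c) hw₁ hw₂
  rw [heq, sub_self, eq_comm, mul_eq_zero, sub_eq_zero, sub_eq_zero] at hdiff
  have hk := hdiff.resolve_left hne
  have hbound := norm_integral_mul_le_half_add (integrable_norm_ofReal_div_sub_sq (μ := H) hw₁)
    (integrable_norm_ofReal_div_sub_sq hw₂)
  have : (1 : ℝ) ≤ c * (((∫ x, ‖(x : ℂ) / (x - w₁)‖ ^ 2 ∂H) +
      ∫ x, ‖(x : ℂ) / (x - w₂)‖ ^ 2 ∂H) / 2) := by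
    calc (1 : ℝ) = c * ‖∫ x, (x : ℂ) / (x - w₁) * ((x : ℂ) / (x - w₂)) ∂H‖ := by
          rw [← Real.norm_of_nonneg hc, ← norm_real, ← norm_mul, ← hk, norm_one]
      _ ≤ _ := mul_le_mul_of_nonneg_left hbound hc
  linarith

end PhiFormulas

section CompanionTransform

variable {H ν : Measure ℝ} {c : ℝ} {z : ℂ}

lemma sUnder_eq : sUnder ν c z = c * St ν z + (c - 1) / z := by
  rw [sUnder]
  ring

lemma im_phiInv_pos (h : 0 < (sUnder ν c z).im) : 0 < (phiInv ν c z).im := by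
  rw [phiInv, neg_div, one_div, neg_im, inv_im, neg_div, neg_neg]
  exact div_pos h (normSq_pos.2 fun h0 => by simp [h0] at h)

lemma Phi_phiInv (hz : z ≠ 0) (hs : sUnder ν c z ≠ 0)
    (heq : St ν z = ∫ l, ((l : ℂ) * (1 - c * z * St ν z - c) - z)⁻¹ ∂H) :
    Phi H c (phiInv ν c z) = z := by
  set s := sUnder ν c z with hs_def
  set w := phiInv ν c z with hw_def
  have hfactor : 1 - c * z * St ν z - c = -(z * s) := by
    rw [hs_def, sUnder]
    field_simp
    ring
  have hden : ∀ l : ℝ,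
      ((l : ℂ) * (1 - c * z * St ν z - c) - z)⁻¹ = (-(z * s))⁻¹ * ((l : ℂ) - w)⁻¹ := fun l => by
    rw [hfactor, hw_def, phiInv, ← hs_def, ← mul_inv]
    congr 1
    field_simp
    ring
  have hSt : St H w = -(z * s) * St ν z := by
    rw [heq, funext hden, integral_const_mul, ← St, mul_inv_cancel_left₀ (by simp [hz, hs])]
  have hcw : (c : ℂ) * w * St H w = c * z * St ν z := by
    rw [hSt, hw_def, phiInv, ← hs_def]
    field_simp
  rw [Phi, hcw, hfactor, hw_def, phiInv, ← hs_def]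
  field_simp

end CompanionTransform

lemma Set.InjOn.leftInvOn_of_rightInvOn {α β : Type*} {f : α → β} {g : β → α} {s : Set α}
    {t : Set β} (hf : InjOn f s) (hfs : MapsTo f s t) (hg : MapsTo g t s)
    (hfg : RightInvOn g f t) : LeftInvOn g f s :=
  fun _ hx => hf (hg (hfs hx)) hx (hfg (hfs hx))

theorem stmt2 (H ν : MeasureTheory.Measure ℝ) (c : ℝ) (hMP : MPRel H c ν) :
    Dinf H c = phiInv ν c '' {z : ℂ | 0 < z.im} ∧
    Set.BijOn (Phi H c) (Dinf H c) {z : ℂ | 0 < z.im} ∧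
    Set.InvOn (phiInv ν c) (Phi H c) (Dinf H c) {z : ℂ | 0 < z.im} := by
  obtain ⟨hH, -, -, -, hc, -, -, -, -, hrel⟩ := hMP
  have him : ∀ z : ℂ, 0 < z.im → 0 < (sUnder ν c z).im := fun z hz => by
    rw [sUnder_eq]
    exact (hrel z hz).2
  have hright : RightInvOn (phiInv ν c) (Phi H c) {z : ℂ | 0 < z.im} := fun z hz =>
    Phi_phiInv (fun h => by simp [h] at hz) (fun h => by simpa [h] using him z hz) (hrel z hz).1
  have hmapsTo : MapsTo (Phi H c) (Dinf H c) {z : ℂ | 0 < z.im} := fun _ hw => hw.2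
  have hmapsTo_inv : MapsTo (phiInv ν c) {z : ℂ | 0 < z.im} (Dinf H c) := fun z hz =>
    ⟨im_phiInv_pos (him z hz), by rwa [hright hz]⟩
  have hinv : InvOn (phiInv ν c) (Phi H c) (Dinf H c) {z : ℂ | 0 < z.im} :=
    ⟨(injOn_Phi hc.le).leftInvOn_of_rightInvOn hmapsTo hmapsTo_inv hright, hright⟩
  have hbij := hinv.bijOn hmapsTo hmapsTo_inv
  refine ⟨?_, hbij, hinv⟩
  rw [← hbij.image_eq, hinv.1.image_image]
end

section
/- Suppose (H, c, ν) satisfies the Marchenko–Pastur relation, and let z ∈ ℂ⁺ satisfy Im((1 − c·z·s_H(z) − c)·z) ≤ 0. Then there is no s ∈ ℂ⁺ with Im((1 − c·z·s − c)·z) > 0 satisfying z·s + 1 = ∫_ℝ λ/(λ − (1 − c·z·s − c)·z) dν(λ). -/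
open MeasureTheory Filter Complex Set

/-!
Put `w = (1 - c z s - c) z ∈ ℂ⁺`. Since `∫ λ/(λ - w) dν = 1 + w s_ν(w)`, the equation for `s` says
`z s = w s_ν(w)`, so `1 - c w s_ν(w) - c = 1 - c z s - c =: u` and `w = u z`. The Marchenko–Pastur
relation at `w` then collapses to `s_ν(w) = ∫ 1/(u (λ - z)) dH = u⁻¹ s_H(z)`, whence
`z s = u z · u⁻¹ s_H(z) = z s_H(z)`: the only candidate is `s = s_H(z)`, for which
`Im((1 - c z s - c) z) ≤ 0` by hypothesis.
-/

lemma ofReal_sub_ne_zero_of_im_ne_zero (l : ℝ) {w : ℂ} (hw : w.im ≠ 0) : (l : ℂ) - w ≠ 0 :=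
  fun h => hw (by simpa using congrArg im h)

lemma norm_inv_ofReal_sub_le (l : ℝ) {w : ℂ} (hw : w.im ≠ 0) :
    ‖((l : ℂ) - w)⁻¹‖ ≤ |w.im|⁻¹ := by
  rw [norm_inv]
  refine inv_anti₀ (abs_pos.mpr hw) ?_
  simpa using abs_im_le_norm ((l : ℂ) - w)

lemma integrable_inv_ofReal_sub (μ : Measure ℝ) [IsFiniteMeasure μ] {w : ℂ} (hw : w.im ≠ 0) :
    Integrable (fun l : ℝ => ((l : ℂ) - w)⁻¹) μ := by
  refine (integrable_const |w.im|⁻¹).mono' ((continuous_ofReal.sub continuous_const).inv₀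
    fun l => ofReal_sub_ne_zero_of_im_ne_zero l hw).aestronglyMeasurable ?_
  exact Filter.Eventually.of_forall fun l => norm_inv_ofReal_sub_le l hw

lemma integral_ofReal_div_ofReal_sub (μ : Measure ℝ) [IsProbabilityMeasure μ] {w : ℂ}
    (hw : w.im ≠ 0) : ∫ l, (l : ℂ) / ((l : ℂ) - w) ∂μ = 1 + w * St μ w := by
  have hsplit : ∀ l : ℝ, (l : ℂ) / ((l : ℂ) - w) = 1 + w * ((l : ℂ) - w)⁻¹ := by
    intro l
    field_simp [ofReal_sub_ne_zero_of_im_ne_zero l hw]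
    ring
  simp_rw [hsplit]
  rw [integral_add (integrable_const 1) ((integrable_inv_ofReal_sub μ hw).const_mul w),
    integral_const_mul]
  simp [St]

lemma integral_inv_ofReal_mul_sub_mul (μ : Measure ℝ) (u z : ℂ) :
    ∫ l, ((l : ℂ) * u - u * z)⁻¹ ∂μ = u⁻¹ * St μ z := by
  simp_rw [show ∀ l : ℝ, (l : ℂ) * u - u * z = u * ((l : ℂ) - z) from fun l => by ring, mul_inv]
  exact integral_const_mul _ _

lemma MPRel.eq_St_of_eq_integral {H ν : Measure ℝ} {c : ℝ} (hMP : MPRel H c ν) {z s : ℂ}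
    (hw : 0 < ((1 - (c : ℂ) * z * s - (c : ℂ)) * z).im)
    (hs : z * s + 1 = ∫ l, (l : ℂ) / ((l : ℂ) - (1 - (c : ℂ) * z * s - (c : ℂ)) * z) ∂ν) :
    s = St H z := by
  obtain ⟨-, -, -, -, -, hν, -, -, -, hrel⟩ := hMP
  generalize hu_def : 1 - (c : ℂ) * z * s - (c : ℂ) = u at hw hs
  have hw0 : u * z ≠ 0 := fun h => by simp [h] at hw
  have hzs : z * s = u * z * St ν (u * z) := by
    rw [integral_ofReal_div_ofReal_sub ν hw.ne'] at hs
    linear_combination hs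
  have hu : 1 - (c : ℂ) * (u * z) * St ν (u * z) - c = u := by
    linear_combination (c : ℂ) * hzs + hu_def
  have hSt : St ν (u * z) = u⁻¹ * St H z := by
    simpa only [hu, integral_inv_ofReal_mul_sub_mul] using (hrel _ hw).1
  refine mul_left_cancel₀ (right_ne_zero_of_mul hw0) ?_
  rw [hzs, hSt]
  field_simp [left_ne_zero_of_mul hw0]

theorem stmt5_general (H ν : MeasureTheory.Measure ℝ) (c : ℝ) (hMP : MPRel H c ν)
    (z : ℂ)
    (hPhi : ((1 - (c : ℂ) * z * St H z - (c : ℂ)) * z).im ≤ 0) :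
    ¬ ∃ s : ℂ, 0 < s.im ∧ 0 < ((1 - (c : ℂ) * z * s - (c : ℂ)) * z).im ∧
      z * s + 1 = ∫ l, (l : ℂ) / ((l : ℂ) - (1 - (c : ℂ) * z * s - (c : ℂ)) * z) ∂ν := by
  rintro ⟨s, -, hw, hs⟩
  rw [hMP.eq_St_of_eq_integral hw hs] at hw
  exact hPhi.not_gt hw

theorem stmt5 (H ν : MeasureTheory.Measure ℝ) (c : ℝ) (hMP : MPRel H c ν)
    (z : ℂ) (hz : 0 < z.im)
    (hPhi : ((1 - (c : ℂ) * z * St H z - (c : ℂ)) * z).im ≤ 0) :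
    ¬ ∃ s : ℂ, 0 < s.im ∧ 0 < ((1 - (c : ℂ) * z * s - (c : ℂ)) * z).im ∧
      z * s + 1 = ∫ l, (l : ℂ) / ((l : ℂ) - (1 - (c : ℂ) * z * s - (c : ℂ)) * z) ∂ν :=
  stmt5_general H ν c hMP z hPhi
end

section
/- Let ν̂ be a probability measure on ℝ with compact support contained in [0,∞) and let c > 0. Define U = {z ∈ ℂ⁺ : there exists s ∈ ℂ⁺ which is a population-Stieltjes-estimator value at z for (ν̂, c)}. Then U is an open subset of ℂ, and there exists κ > 0 such that every z ∈ ℂ⁺ with |z| ≥ κ belongs to U. -/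
open MeasureTheory Filter Complex Set

/-- `s` is a population-Stieltjes-estimator value at `z` for `(ν, c)`. -/
def EstVal (ν : MeasureTheory.Measure ℝ) (c : ℝ) (z s : ℂ) : Prop :=
  z * s + 1 = (∫ l, (l : ℂ) / ((l : ℂ) - (1 - (c : ℂ) * z * s - (c : ℂ)) * z) ∂ν) ∧
  0 < ((1 - (c : ℂ) * z * s - (c : ℂ)) * z).im ∧
  c * ‖z‖ * |(z * s).im| < ((1 - (c : ℂ) * z * s - (c : ℂ)) * z).im


/-!
Write `J(w) = ∫ λ / (λ - w) dν(λ)` and `w = (1 - c z s - c) z`. The equation reads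
`z s + 1 = J(w)`, hence `w = z (1 - c J(w))`; since `Im J(w) > 0` on the upper half-plane
unless `ν` is concentrated at `0` (where `J = 0`), the factor `1 - c J(w)` never vanishes there.
So the set of admissible `z` is the image, under the holomorphic map `w ↦ w / (1 - c J(w))`, of
an open subset of the upper half-plane cut out by strict inequalities. That map is not constant
(it grows like `w` along `i ℝ`), so the open mapping theorem makes the image open.

If `ν` lives on `[0, M]` and `|z|` is large, then near `z` we have `|J| ≤ 4M / |z|`,
`0 ≤ Im J ≤ 16 M Im w / |z|²`, and `J` is `16 M / |z|²`-Lipschitz. Hence `w ↦ z (1 - c J(w))` is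
a contraction of a closed region around `z` on which `Im w` stays between `Im z / 2` and
`2 Im z`; its fixed point `w` gives `s = (J(w) - 1) / z`, and the same bounds yield `Im s > 0`
and the strict inequality `c |z| |Im (z s)| < Im w`.
-/

open Metric UpperHalfPlane

lemma msupport_eq_support (μ : Measure ℝ) : msupport μ = μ.support :=
  Set.ext fun x ↦ (Measure.mem_support_iff_forall x).symm

lemma ae_mem_msupport (μ : Measure ℝ) : ∀ᵐ l ∂μ, l ∈ msupport μ := by
  rw [msupport_eq_support]
  exact Measure.support_mem_ae

lemma exists_ae_mem_Icc_zero (μ : Measure ℝ) (hcomp : IsCompact (msupport μ))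
    (hpos : msupport μ ⊆ Ici 0) : ∃ M, 0 ≤ M ∧ ∀ᵐ l ∂μ, l ∈ Icc 0 M := by
  obtain ⟨M, hM⟩ := hcomp.bddAbove
  refine ⟨max M 0, le_max_right _ _, ?_⟩
  filter_upwards [ae_mem_msupport μ] with l hl
  exact ⟨hpos hl, (hM hl).trans (le_max_left _ _)⟩

noncomputable def weightedStieltjes (ν : Measure ℝ) (w : ℂ) : ℂ :=
  ∫ l, (l : ℂ) / ((l : ℂ) - w) ∂ν

section WeightedStieltjes

variable {ν : Measure ℝ} {M δ : ℝ} {w : ℂ}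

lemma im_le_norm_ofReal_sub (hw : 0 ≤ w.im) (l : ℝ) : w.im ≤ ‖(l : ℂ) - w‖ := by
  simpa [abs_of_nonneg hw] using Complex.abs_im_le_norm ((l : ℂ) - w)

lemma norm_div_ofReal_sub_le {l : ℝ} (hl : l ∈ Icc 0 M) (hδ : 0 < δ) (h : δ ≤ ‖(l : ℂ) - w‖) :
    ‖(l : ℂ) / ((l : ℂ) - w)‖ ≤ M / δ := by
  rw [norm_div, Complex.norm_real, Real.norm_of_nonneg hl.1]
  exact div_le_div₀ (hl.1.trans hl.2) hl.2 hδ h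

lemma im_div_ofReal_sub (w : ℂ) (l : ℝ) :
    ((l : ℂ) / ((l : ℂ) - w)).im = l * w.im / Complex.normSq ((l : ℂ) - w) := by
  simp only [Complex.div_im, Complex.ofReal_im, Complex.sub_im, Complex.sub_re,
    Complex.ofReal_re]
  ring

lemma im_div_ofReal_sub_nonneg {l : ℝ} (hl : 0 ≤ l) (hw : 0 ≤ w.im) :
    0 ≤ ((l : ℂ) / ((l : ℂ) - w)).im := by
  rw [im_div_ofReal_sub]
  exact div_nonneg (mul_nonneg hl hw) (Complex.normSq_nonneg _)

variable [IsProbabilityMeasure ν]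

lemma integrable_div_ofReal_sub (hM : ∀ᵐ l ∂ν, l ∈ Icc 0 M) (hδ : 0 < δ)
    (hw : ∀ l ∈ Icc 0 M, δ ≤ ‖(l : ℂ) - w‖) :
    Integrable (fun l : ℝ ↦ (l : ℂ) / ((l : ℂ) - w)) ν := by
  refine Integrable.mono' (integrable_const (M / δ))
    (by fun_prop : Measurable _).aestronglyMeasurable ?_
  filter_upwards [hM] with l hl
  exact norm_div_ofReal_sub_le hl hδ (hw l hl)

lemma norm_weightedStieltjes_le (hM : ∀ᵐ l ∂ν, l ∈ Icc 0 M) (hδ : 0 < δ)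
    (hw : ∀ l ∈ Icc 0 M, δ ≤ ‖(l : ℂ) - w‖) : ‖weightedStieltjes ν w‖ ≤ M / δ := by
  refine (norm_integral_le_of_norm_le_const (C := M / δ) ?_).trans_eq (by simp)
  filter_upwards [hM] with l hl
  exact norm_div_ofReal_sub_le hl hδ (hw l hl)

lemma im_weightedStieltjes_mem_Icc (hM : ∀ᵐ l ∂ν, l ∈ Icc 0 M) (hδ : 0 < δ)
    (hw : ∀ l ∈ Icc 0 M, δ ≤ ‖(l : ℂ) - w‖) (hwim : 0 ≤ w.im) :
    (weightedStieltjes ν w).im ∈ Icc 0 (M * w.im / δ ^ 2) := by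
  have hint := integrable_div_ofReal_sub hM hδ hw
  have him : ∫ l, ((l : ℂ) / ((l : ℂ) - w)).im ∂ν = (weightedStieltjes ν w).im := integral_im hint
  rw [← him]
  constructor
  · refine integral_nonneg_of_ae ?_
    filter_upwards [hM] with l hl
    exact im_div_ofReal_sub_nonneg hl.1 hwim
  · refine (integral_mono_ae hint.im (integrable_const (M * w.im / δ ^ 2)) ?_).trans_eq (by simp)
    filter_upwards [hM] with l hl
    change ((l : ℂ) / ((l : ℂ) - w)).im ≤ _
    rw [im_div_ofReal_sub, Complex.normSq_eq_norm_sq]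
    exact div_le_div₀ (by have := hl.1.trans hl.2; positivity)
      (mul_le_mul_of_nonneg_right hl.2 hwim) (by positivity) (pow_le_pow_left₀ hδ.le (hw l hl) 2)

lemma norm_weightedStieltjes_sub_le (hM : ∀ᵐ l ∂ν, l ∈ Icc 0 M) (hδ : 0 < δ) {w₁ w₂ : ℂ}
    (hw₁ : ∀ l ∈ Icc 0 M, δ ≤ ‖(l : ℂ) - w₁‖) (hw₂ : ∀ l ∈ Icc 0 M, δ ≤ ‖(l : ℂ) - w₂‖) :
    ‖weightedStieltjes ν w₁ - weightedStieltjes ν w₂‖ ≤ M / δ ^ 2 * ‖w₁ - w₂‖ := by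
  rw [weightedStieltjes, weightedStieltjes, ← integral_sub (integrable_div_ofReal_sub hM hδ hw₁)
    (integrable_div_ofReal_sub hM hδ hw₂)]
  refine (norm_integral_le_of_norm_le_const (C := M / δ ^ 2 * ‖w₁ - w₂‖) ?_).trans_eq (by simp)
  filter_upwards [hM] with l hl
  have h₁ := hw₁ l hl
  have h₂ := hw₂ l hl
  have hne₁ : (l : ℂ) - w₁ ≠ 0 := norm_pos_iff.mp (hδ.trans_le h₁)
  have hne₂ : (l : ℂ) - w₂ ≠ 0 := norm_pos_iff.mp (hδ.trans_le h₂)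
  have hid : (l : ℂ) / ((l : ℂ) - w₁) - (l : ℂ) / ((l : ℂ) - w₂)
      = (l : ℂ) * (w₁ - w₂) / (((l : ℂ) - w₁) * ((l : ℂ) - w₂)) := by
    field_simp
    ring
  rw [hid, norm_div, norm_mul, norm_mul, Complex.norm_real, Real.norm_of_nonneg hl.1,
    div_le_iff₀ (by positivity), sq]
  calc l * ‖w₁ - w₂‖ ≤ M * ‖w₁ - w₂‖ := by gcongr; exact hl.2
    _ = M / (δ * δ) * ‖w₁ - w₂‖ * (δ * δ) := by field_simp
    _ ≤ M / (δ * δ) * ‖w₁ - w₂‖ * (‖(l : ℂ) - w₁‖ * ‖(l : ℂ) - w₂‖) := by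
      have := hl.1.trans hl.2
      gcongr

lemma hasDerivAt_div_ofReal_sub (l : ℝ) {x : ℂ} (hx : (l : ℂ) - x ≠ 0) :
    HasDerivAt (fun x : ℂ ↦ (l : ℂ) / ((l : ℂ) - x)) ((l : ℂ) / ((l : ℂ) - x) ^ 2) x := by
  have h := (((hasDerivAt_id x).const_sub (l : ℂ)).inv hx).const_mul (l : ℂ)
  simpa [div_eq_mul_inv] using h

lemma differentiableOn_weightedStieltjes (hM : ∀ᵐ l ∂ν, l ∈ Icc 0 M) :
    DifferentiableOn ℂ (weightedStieltjes ν) upperHalfPlaneSet := by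
  intro w₀ hw₀
  have hε : 0 < w₀.im / 2 := half_pos hw₀
  have hlow : ∀ x ∈ ball w₀ (w₀.im / 2), ∀ l : ℝ, w₀.im / 2 ≤ ‖(l : ℂ) - x‖ := by
    intro x hx l
    have h := (abs_le.mp ((Complex.abs_im_le_norm (x - w₀)).trans (mem_ball_iff_norm.mp hx).le)).1
    rw [Complex.sub_im] at h
    exact (by linarith : w₀.im / 2 ≤ x.im).trans (im_le_norm_ofReal_sub (by linarith) l)
  have hderiv := hasDerivAt_integral_of_dominated_loc_of_deriv_le (μ := ν)
    (F := fun x l ↦ (l : ℂ) / ((l : ℂ) - x))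
    (F' := fun x l ↦ (l : ℂ) / ((l : ℂ) - x) ^ 2) (bound := fun _ ↦ M / (w₀.im / 2) ^ 2)
    (ball_mem_nhds w₀ hε) (.of_forall fun x ↦ (by fun_prop : Measurable _).aestronglyMeasurable)
    (integrable_div_ofReal_sub hM hε fun l _ ↦ hlow w₀ (mem_ball_self hε) l)
    (by fun_prop : Measurable _).aestronglyMeasurable ?_ (integrable_const _) ?_
  · exact hderiv.2.differentiableAt.differentiableWithinAt
  · filter_upwards [hM] with l hl x hx
    rw [norm_div, norm_pow, Complex.norm_real, Real.norm_of_nonneg hl.1]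
    exact div_le_div₀ (hl.1.trans hl.2) hl.2 (by positivity)
      (pow_le_pow_left₀ hε.le (hlow x hx l) 2)
  · filter_upwards with l x hx
    exact hasDerivAt_div_ofReal_sub l (norm_pos_iff.mp (hε.trans_le (hlow x hx l)))

lemma weightedStieltjes_eq_zero_of_im_eq_zero (hM : ∀ᵐ l ∂ν, l ∈ Icc 0 M) (hw : 0 < w.im)
    (h : (weightedStieltjes ν w).im = 0) : weightedStieltjes ν w = 0 := by
  have hint := integrable_div_ofReal_sub hM hw fun l _ ↦ im_le_norm_ofReal_sub hw.le l
  have him : ∫ l, ((l : ℂ) / ((l : ℂ) - w)).im ∂ν = (weightedStieltjes ν w).im := integral_im hint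
  have hnonneg : ∀ᵐ l : ℝ ∂ν, 0 ≤ ((l : ℂ) / ((l : ℂ) - w)).im := by
    filter_upwards [hM] with l hl
    exact im_div_ofReal_sub_nonneg hl.1 hw.le
  have hzero := (integral_eq_zero_iff_of_nonneg_ae hnonneg hint.im).mp (him.trans h)
  refine integral_eq_zero_of_ae ?_
  filter_upwards [hzero] with l hl
  change ((l : ℂ) / ((l : ℂ) - w)).im = 0 at hl
  have hne : Complex.normSq ((l : ℂ) - w) ≠ 0 := by
    rw [Ne, Complex.normSq_eq_zero, sub_eq_zero]
    rintro rfl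
    simp at hw
  rw [im_div_ofReal_sub, div_eq_zero_iff, mul_eq_zero] at hl
  obtain (rfl | hw0) | hn := hl
  · simp
  · exact absurd hw0 hw.ne'
  · exact absurd hn hne

lemma one_sub_mul_weightedStieltjes_ne_zero (hM : ∀ᵐ l ∂ν, l ∈ Icc 0 M) (c : ℝ)
    (hw : 0 < w.im) : 1 - c * weightedStieltjes ν w ≠ 0 := by
  intro h
  have hcJ : (c : ℂ) * weightedStieltjes ν w = 1 := by linear_combination -h
  have hc : c ≠ 0 := by rintro rfl; simp at hcJ
  have him : (weightedStieltjes ν w).im = 0 := by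
    simpa [hc] using congrArg Complex.im hcJ
  rw [weightedStieltjes_eq_zero_of_im_eq_zero hM hw him, mul_zero] at hcJ
  exact zero_ne_one hcJ

end WeightedStieltjes

noncomputable def zOfW (ν : Measure ℝ) (c : ℝ) (w : ℂ) : ℂ := w / (1 - c * weightedStieltjes ν w)

def estimatorDomain (ν : Measure ℝ) (c : ℝ) : Set ℂ :=
  {z | 0 < z.im ∧ ∃ s : ℂ, 0 < s.im ∧ EstVal ν c z s}

def estimatorPreimage (ν : Measure ℝ) (c : ℝ) : Set ℂ :=
  {w | 0 < w.im ∧ 0 < (zOfW ν c w).im ∧ 0 < ((weightedStieltjes ν w - 1) / zOfW ν c w).im ∧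
    c * ‖zOfW ν c w‖ * |(weightedStieltjes ν w).im| < w.im}

section EstimatorDomain

variable {ν : Measure ℝ} {M c : ℝ} {z w : ℂ}

lemma estVal_of_mul_eq (hz : z ≠ 0) (hzw : z * (1 - c * weightedStieltjes ν w) = w)
    (hw : 0 < w.im) (hlt : c * ‖z‖ * |(weightedStieltjes ν w).im| < w.im) :
    EstVal ν c z ((weightedStieltjes ν w - 1) / z) := by
  have hzs : z * ((weightedStieltjes ν w - 1) / z) = weightedStieltjes ν w - 1 :=
    mul_div_cancel₀ _ hz
  have hw' : (1 - c * z * ((weightedStieltjes ν w - 1) / z) - c) * z = w := by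
    linear_combination hzw - (c : ℂ) * z * hzs
  refine ⟨?_, ?_, ?_⟩ <;> rw [hw']
  · rw [hzs, sub_add_cancel]
    rfl
  · exact hw
  · simpa [hzs] using hlt

variable [IsProbabilityMeasure ν]

lemma estimatorDomain_eq_image (hM : ∀ᵐ l ∂ν, l ∈ Icc 0 M) :
    estimatorDomain ν c = zOfW ν c '' estimatorPreimage ν c := by
  ext z
  constructor
  · rintro ⟨hz, s, hs, hJ, hw, hlt⟩
    set w := (1 - c * z * s - c) * z
    have hJ : weightedStieltjes ν w = z * s + 1 := hJ.symm
    have hD := one_sub_mul_weightedStieltjes_ne_zero hM c hw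
    have hzw : zOfW ν c w = z := by
      rw [zOfW, div_eq_iff hD, hJ]
      ring
    have hz0 : z ≠ 0 := by rintro rfl; simp at hz
    refine ⟨w, ⟨hw, hzw ▸ hz, ?_, ?_⟩, hzw⟩ <;> rw [hzw, hJ]
    · rwa [add_sub_cancel_right, mul_div_cancel_left₀ _ hz0]
    · simpa using hlt
  · rintro ⟨w, ⟨hw, hz, hs, hlt⟩, rfl⟩
    have hD := one_sub_mul_weightedStieltjes_ne_zero hM c hw
    refine ⟨hz, _, hs, estVal_of_mul_eq ?_ (div_mul_cancel₀ w hD) hw hlt⟩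
    intro h
    simp [h] at hz

lemma analyticOnNhd_zOfW (hM : ∀ᵐ l ∂ν, l ∈ Icc 0 M) (c : ℝ) :
    AnalyticOnNhd ℂ (zOfW ν c) upperHalfPlaneSet :=
  (differentiableOn_id.div (differentiableOn_const _ |>.sub
    ((differentiableOn_const _).mul (differentiableOn_weightedStieltjes hM)))
    fun _ hw ↦ one_sub_mul_weightedStieltjes_ne_zero hM c hw).analyticOnNhd
    isOpen_upperHalfPlaneSet

lemma isOpen_estimatorPreimage (hM : ∀ᵐ l ∂ν, l ∈ Icc 0 M) :
    IsOpen (estimatorPreimage ν c) := by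
  rw [isOpen_iff_mem_nhds]
  rintro w ⟨hw, hz, hs, hlt⟩
  have hJ : ContinuousAt (weightedStieltjes ν) w :=
    (differentiableOn_weightedStieltjes hM).continuousOn.continuousAt
      (isOpen_upperHalfPlaneSet.mem_nhds hw)
  have hZ : ContinuousAt (zOfW ν c) w := (analyticOnNhd_zOfW hM c w hw).continuousAt
  have hz0 : zOfW ν c w ≠ 0 := by intro h; simp [h] at hz
  filter_upwards [isOpen_upperHalfPlaneSet.mem_nhds hw,
    continuousAt_const.eventually_lt (Complex.continuous_im.continuousAt.comp hZ) hz,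
    continuousAt_const.eventually_lt
      (Complex.continuous_im.continuousAt.comp ((hJ.sub continuousAt_const).div hZ hz0)) hs,
    (continuousAt_const.mul (continuous_norm.continuousAt.comp hZ)).mul
      (continuous_abs.continuousAt.comp (Complex.continuous_im.continuousAt.comp hJ))
      |>.eventually_lt Complex.continuous_im.continuousAt hlt] with v h₁ h₂ h₃ h₄
  exact ⟨h₁, h₂, h₃, h₄⟩

lemma exists_zOfW_ne (hM : ∀ᵐ l ∂ν, l ∈ Icc 0 M) (hM0 : 0 ≤ M) (c : ℝ) (z₀ : ℂ) :
    ∃ w, 0 < w.im ∧ zOfW ν c w ≠ z₀ := by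
  set t := ‖z₀‖ * (1 + |c| * M) + 1
  have ht : 1 ≤ t := le_add_of_nonneg_left (by positivity)
  have hwim : 0 < (t * Complex.I).im := by simpa using one_pos.trans_le ht
  refine ⟨t * Complex.I, hwim, fun h ↦ ?_⟩
  have hD := one_sub_mul_weightedStieltjes_ne_zero hM c hwim
  rw [zOfW, div_eq_iff hD] at h
  have hJ : ‖weightedStieltjes ν (t * Complex.I)‖ ≤ M / t := by
    simpa using norm_weightedStieltjes_le hM hwim fun l _ ↦ im_le_norm_ofReal_sub hwim.le l
  have hMt : M / t ≤ M := div_le_self hM0 ht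
  have hDle : ‖1 - c * weightedStieltjes ν (t * Complex.I)‖ ≤ 1 + |c| * M :=
    calc _ ≤ ‖(1 : ℂ)‖ + ‖(c : ℂ) * weightedStieltjes ν (t * Complex.I)‖ := norm_sub_le _ _
      _ ≤ 1 + |c| * M := by
        rw [norm_one, norm_mul, Complex.norm_real, Real.norm_eq_abs]
        gcongr
        exact hJ.trans hMt
  have : t ≤ ‖z₀‖ * (1 + |c| * M) :=
    calc t = ‖t * Complex.I‖ := by simp [abs_of_pos (one_pos.trans_le ht)]
      _ = ‖z₀‖ * ‖1 - c * weightedStieltjes ν (t * Complex.I)‖ :=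
        (congrArg norm h).trans (norm_mul _ _)
      _ ≤ ‖z₀‖ * (1 + |c| * M) := by gcongr
  linarith

lemma isOpen_estimatorDomain (hM : ∀ᵐ l ∂ν, l ∈ Icc 0 M) (hM0 : 0 ≤ M) :
    IsOpen (estimatorDomain ν c) := by
  rw [estimatorDomain_eq_image hM]
  rcases (analyticOnNhd_zOfW hM c).is_constant_or_isOpen
    (convex_halfSpace_im_gt 0).isPreconnected with ⟨z₀, hconst⟩ | hopen
  · obtain ⟨w, hw, hne⟩ := exists_zOfW_ne hM hM0 c z₀
    exact absurd (hconst w hw) hne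
  · exact hopen _ (fun w hw ↦ hw.1) (isOpen_estimatorPreimage hM)

end EstimatorDomain

def trapRegion (z : ℂ) : Set ℂ := closedBall z (‖z‖ / 2) ∩ Complex.im ⁻¹' Icc (z.im / 2) (2 * z.im)

lemma isClosed_trapRegion (z : ℂ) : IsClosed (trapRegion z) :=
  isClosed_closedBall.inter (isClosed_Icc.preimage Complex.continuous_im)

lemma mem_trapRegion_self {z : ℂ} (hz : 0 < z.im) : z ∈ trapRegion z :=
  ⟨mem_closedBall_self (by positivity), by
    simp only [mem_preimage, mem_Icc]
    constructor <;> linarith⟩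

section TrapRegion

variable {ν : Measure ℝ} {M c : ℝ} {z w : ℂ}

lemma norm_pos_of_im_pos (hz : 0 < z.im) : 0 < ‖z‖ :=
  hz.trans_le ((le_abs_self _).trans (Complex.abs_im_le_norm z))

lemma quarter_norm_le_norm_ofReal_sub (hMz : 4 * M ≤ ‖z‖) (hw : w ∈ trapRegion z) {l : ℝ}
    (hl : l ∈ Icc 0 M) : ‖z‖ / 4 ≤ ‖(l : ℂ) - w‖ := by
  have h₁ : ‖z - w‖ ≤ ‖z‖ / 2 := by rw [← dist_eq_norm, dist_comm]; exact hw.1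
  have h₂ := norm_sub_le_norm_sub_add_norm_sub z w l
  have h₃ := norm_le_insert' z (l : ℂ)
  have h₄ : ‖(l : ℂ)‖ ≤ M := by rw [Complex.norm_real, Real.norm_of_nonneg hl.1]; exact hl.2
  rw [norm_sub_rev w] at h₂
  linarith

variable [IsProbabilityMeasure ν]

lemma norm_weightedStieltjes_mul_le (hM : ∀ᵐ l ∂ν, l ∈ Icc 0 M) (hz : 0 < z.im)
    (hMz : 4 * M ≤ ‖z‖) (hw : w ∈ trapRegion z) : ‖weightedStieltjes ν w‖ * ‖z‖ ≤ 4 * M := by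
  have hK := norm_pos_of_im_pos hz
  have h := norm_weightedStieltjes_le hM (by positivity) fun l hl ↦
    quarter_norm_le_norm_ofReal_sub hMz hw hl
  rwa [div_div_eq_mul_div, le_div_iff₀ hK, mul_comm M] at h

lemma im_weightedStieltjes_mul_le (hM : ∀ᵐ l ∂ν, l ∈ Icc 0 M) (hz : 0 < z.im)
    (hMz : 4 * M ≤ ‖z‖) (hw : w ∈ trapRegion z) :
    0 ≤ (weightedStieltjes ν w).im ∧ (weightedStieltjes ν w).im * ‖z‖ ^ 2 ≤ 16 * M * w.im := by
  have hK := norm_pos_of_im_pos hz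
  have hwim : 0 ≤ w.im := by linarith [hw.2.1]
  obtain ⟨h₀, h⟩ := im_weightedStieltjes_mem_Icc hM (by positivity)
    (fun l hl ↦ quarter_norm_le_norm_ofReal_sub hMz hw hl) hwim
  refine ⟨h₀, ?_⟩
  rw [div_pow, div_div_eq_mul_div, le_div_iff₀ (by positivity)] at h
  linarith

lemma norm_weightedStieltjes_sub_mul_le (hM : ∀ᵐ l ∂ν, l ∈ Icc 0 M) (hz : 0 < z.im)
    (hMz : 4 * M ≤ ‖z‖) {w₁ w₂ : ℂ} (hw₁ : w₁ ∈ trapRegion z) (hw₂ : w₂ ∈ trapRegion z) :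
    ‖weightedStieltjes ν w₁ - weightedStieltjes ν w₂‖ * ‖z‖ ^ 2 ≤ 16 * M * ‖w₁ - w₂‖ := by
  have hK := norm_pos_of_im_pos hz
  have h := norm_weightedStieltjes_sub_le hM (by positivity)
    (fun l hl ↦ quarter_norm_le_norm_ofReal_sub hMz hw₁ hl)
    (fun l hl ↦ quarter_norm_le_norm_ofReal_sub hMz hw₂ hl)
  rw [div_pow, div_div_eq_mul_div, div_mul_eq_mul_div, le_div_iff₀ (by positivity)] at h
  linarith

lemma abs_im_mul_weightedStieltjes_mul_le (hM : ∀ᵐ l ∂ν, l ∈ Icc 0 M) (hM0 : 0 ≤ M)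
    (hz : 0 < z.im) (hMz : 4 * M ≤ ‖z‖) (hw : w ∈ trapRegion z) :
    |(z * weightedStieltjes ν w).im| * ‖z‖ ≤ 36 * M * z.im := by
  set J := weightedStieltjes ν w
  have hK := norm_pos_of_im_pos hz
  have hnorm := norm_weightedStieltjes_mul_le hM hz hMz hw
  obtain ⟨him₀, him⟩ := im_weightedStieltjes_mul_le hM hz hMz hw
  have hre : |z.re| * J.im * ‖z‖ ≤ 32 * M * z.im :=
    calc |z.re| * J.im * ‖z‖ ≤ ‖z‖ * J.im * ‖z‖ := by gcongr; exact Complex.abs_re_le_norm z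
      _ = J.im * ‖z‖ ^ 2 := by ring
      _ ≤ 16 * M * w.im := him
      _ ≤ 32 * M * z.im := by nlinarith [hw.2.2]
  have hJre : z.im * |J.re| * ‖z‖ ≤ 4 * M * z.im :=
    calc z.im * |J.re| * ‖z‖ ≤ z.im * (‖J‖ * ‖z‖) := by
          rw [mul_assoc]; gcongr; exact Complex.abs_re_le_norm J
      _ ≤ z.im * (4 * M) := by gcongr
      _ = 4 * M * z.im := by ring
  calc |(z * J).im| * ‖z‖ = |z.re * J.im + z.im * J.re| * ‖z‖ := by rw [Complex.mul_im]
    _ ≤ (|z.re| * J.im + z.im * |J.re|) * ‖z‖ := by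
        gcongr
        refine (abs_add_le _ _).trans ?_
        rw [abs_mul, abs_mul, abs_of_nonneg him₀, abs_of_pos hz]
    _ ≤ 36 * M * z.im := by linarith

lemma mapsTo_trapRegion (hM : ∀ᵐ l ∂ν, l ∈ Icc 0 M) (hM0 : 0 ≤ M) (hc : 0 ≤ c)
    (hz : 0 < z.im) (hMz : 4 * M ≤ ‖z‖) (hcMz : 72 * c * M ≤ ‖z‖) :
    MapsTo (fun w ↦ z * (1 - c * weightedStieltjes ν w)) (trapRegion z) (trapRegion z) := by
  intro w hw
  set J := weightedStieltjes ν w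
  have hK := norm_pos_of_im_pos hz
  have hnorm := norm_weightedStieltjes_mul_le hM hz hMz hw
  have him := abs_im_mul_weightedStieltjes_mul_le hM hM0 hz hMz hw
  have hsmall : c * |(z * J).im| ≤ z.im / 2 := by
    refine le_of_mul_le_mul_right ?_ hK
    calc c * |(z * J).im| * ‖z‖ = c * (|(z * J).im| * ‖z‖) := by ring
      _ ≤ c * (36 * M * z.im) := by gcongr
      _ = 72 * c * M * (z.im / 2) := by ring
      _ ≤ ‖z‖ * (z.im / 2) := by gcongr
      _ = z.im / 2 * ‖z‖ := by ring
  have hcJ : |c * (z * J).im| ≤ z.im / 2 := by rwa [abs_mul, abs_of_nonneg hc]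
  rw [abs_le] at hcJ
  refine ⟨?_, ?_⟩
  · rw [mem_closedBall, dist_eq_norm]
    calc ‖z * (1 - c * J) - z‖ = c * (‖J‖ * ‖z‖) := by
          rw [show z * (1 - c * J) - z = -(c * (J * z)) by ring, norm_neg, norm_mul, norm_mul,
            Complex.norm_real, Real.norm_of_nonneg hc]
      _ ≤ c * (4 * M) := by gcongr
      _ ≤ ‖z‖ / 2 := by nlinarith
  · have hTim : (z * (1 - c * J)).im = z.im - c * (z * J).im := by
      rw [mul_sub, mul_one, mul_left_comm, Complex.sub_im, Complex.im_ofReal_mul]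
    simp only [mem_preimage, mem_Icc]
    rw [hTim]
    constructor <;> linarith

lemma lipschitzOnWith_trapRegion (hM : ∀ᵐ l ∂ν, l ∈ Icc 0 M) (hc : 0 ≤ c) (hz : 0 < z.im)
    (hMz : 4 * M ≤ ‖z‖) (hcMz : 32 * c * M ≤ ‖z‖) :
    LipschitzOnWith (1 / 2) (fun w ↦ z * (1 - c * weightedStieltjes ν w)) (trapRegion z) := by
  have hK := norm_pos_of_im_pos hz
  refine LipschitzOnWith.of_dist_le_mul fun w₁ hw₁ w₂ hw₂ ↦ ?_
  have hJ := norm_weightedStieltjes_sub_mul_le hM hz hMz hw₁ hw₂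
  rw [dist_eq_norm, dist_eq_norm, show z * (1 - c * weightedStieltjes ν w₁) -
    z * (1 - c * weightedStieltjes ν w₂) = -(c * z * (weightedStieltjes ν w₁ -
    weightedStieltjes ν w₂)) by ring, norm_neg, norm_mul, norm_mul, Complex.norm_real,
    Real.norm_of_nonneg hc]
  refine le_of_mul_le_mul_right ?_ hK
  calc c * ‖z‖ * ‖weightedStieltjes ν w₁ - weightedStieltjes ν w₂‖ * ‖z‖
      = c * (‖weightedStieltjes ν w₁ - weightedStieltjes ν w₂‖ * ‖z‖ ^ 2) := by ring
    _ ≤ c * (16 * M * ‖w₁ - w₂‖) := by gcongr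
    _ = 32 * c * M * (1 / 2 * ‖w₁ - w₂‖) := by ring
    _ ≤ ‖z‖ * (1 / 2 * ‖w₁ - w₂‖) := by gcongr
    _ = _ := by push_cast; ring

lemma exists_fixedPoint_mem_trapRegion (hM : ∀ᵐ l ∂ν, l ∈ Icc 0 M) (hM0 : 0 ≤ M) (hc : 0 ≤ c)
    (hz : 0 < z.im) (hMz : 4 * M ≤ ‖z‖) (hcMz : 72 * c * M ≤ ‖z‖) :
    ∃ w ∈ trapRegion z, z * (1 - c * weightedStieltjes ν w) = w := by
  have hmaps := mapsTo_trapRegion hM hM0 hc hz hMz hcMz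
  have hlip := lipschitzOnWith_trapRegion hM hc hz hMz (by nlinarith [mul_nonneg hc hM0])
  obtain ⟨w, hw, hfix, -⟩ := ContractingWith.exists_fixedPoint' (isClosed_trapRegion z).isComplete
    hmaps ⟨by norm_num, hlip.mapsToRestrict hmaps⟩ (mem_trapRegion_self hz) (edist_ne_top _ _)
  exact ⟨w, hw, hfix⟩

lemma exists_estVal_of_le_norm (hM : ∀ᵐ l ∂ν, l ∈ Icc 0 M) (hM0 : 0 ≤ M) (hc : 0 ≤ c)
    (hz : 0 < z.im) (hK : 128 * (c + 1) * (M + 1) ≤ ‖z‖) :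
    ∃ s, 0 < s.im ∧ EstVal ν c z s := by
  have hcM := mul_nonneg hc hM0
  have hK' : 128 * (c * M) + 128 * M + 128 ≤ ‖z‖ := by nlinarith
  have hK0 := norm_pos_of_im_pos hz
  obtain ⟨w, hw, hfix⟩ := exists_fixedPoint_mem_trapRegion hM hM0 hc hz (by linarith)
    (by linarith)
  set J := weightedStieltjes ν w
  have hwim : 0 < w.im := by linarith [hw.2.1]
  have hnorm := norm_weightedStieltjes_mul_le hM hz (by linarith) hw
  obtain ⟨him₀, him⟩ := im_weightedStieltjes_mul_le hM hz (by linarith) hw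
  refine ⟨(J - 1) / z, ?_, estVal_of_mul_eq (norm_pos_iff.mp hK0) hfix hwim ?_⟩
  · have hJre : J.re ≤ 1 / 2 := by
      have := Complex.re_le_norm J
      nlinarith
    have hJim : J.im * ‖z‖ ≤ z.im / 4 := by
      nlinarith [hw.2.2]
    have hre : -(J.im * ‖z‖) ≤ J.im * z.re := by
      nlinarith [neg_abs_le z.re, Complex.abs_re_le_norm z]
    rw [Complex.div_im, ← sub_div]
    refine div_pos ?_ (Complex.normSq_pos.mpr (norm_pos_iff.mp hK0))
    simp only [Complex.sub_im, Complex.one_im, sub_zero, Complex.sub_re, Complex.one_re]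
    nlinarith
  · rw [abs_of_nonneg him₀]
    refine lt_of_mul_lt_mul_right ?_ hK0.le
    nlinarith

end TrapRegion

theorem stmt7 (ν : MeasureTheory.Measure ℝ) (hprob : IsProbabilityMeasure ν)
    (hcomp : IsCompact (msupport ν)) (hpos : msupport ν ⊆ Set.Ici 0)
    (c : ℝ) (hc : 0 < c) :
    IsOpen {z : ℂ | 0 < z.im ∧ ∃ s : ℂ, 0 < s.im ∧ EstVal ν c z s} ∧
    ∃ κ > (0 : ℝ), ∀ z : ℂ, 0 < z.im → κ ≤ ‖z‖ →
      z ∈ {z : ℂ | 0 < z.im ∧ ∃ s : ℂ, 0 < s.im ∧ EstVal ν c z s} := by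
  obtain ⟨M, hM0, hM⟩ := exists_ae_mem_Icc_zero ν hcomp hpos
  refine ⟨isOpen_estimatorDomain hM hM0, 128 * (c + 1) * (M + 1), by positivity, fun z hz hK ↦ ?_⟩
  exact ⟨hz, exists_estVal_of_le_norm hM hM0 hc.le hz hK⟩
end

section
/- Suppose (H, c, ν) satisfies the Marchenko–Pastur relation. Then for every z̃ ∈ ℂ ∖ ℝ the companion transform s_ν̲(z̃) is nonzero (so φ_{ν,c}(z̃) is defined), and for all z̃₁, z̃₂ ∈ ℂ ∖ ℝ: |φ_{ν,c}(z̃₁) − φ_{ν,c}(z̃₂)| ≥ |z̃₁ − z̃₂| / 2. -/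
open MeasureTheory Filter Complex Set

noncomputable section

/-!
Write `u = s̲_ν(z)` and `k_u(λ) = λ / (1 + λu)`. Since `1 - c z s_ν(z) - c = -z u`, the
Marchenko–Pastur relation inverts to `z = -1/u + c ∫ k_u dH` on `ℂ⁺`, and by conjugation
symmetry on all of `ℂ ∖ ℝ`, where moreover `Im z` and `Im u` have the same sign. Taking
imaginary parts, `Im z = Im u · (|u|⁻² - c ∫ |k_u|² dH)`, hence `c |u|² ∫ |k_u|² dH < 1`.
The resolvent identity `k_{u₁} - k_{u₂} = (u₂ - u₁) k_{u₁} k_{u₂}` factors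
`z₁ - z₂ = (φ(z₁) - φ(z₂)) (1 - c u₁ u₂ ∫ k_{u₁} k_{u₂} dH)`, and by AM–GM the subtracted term
has norm below the average of the two bounds `c |uᵢ|² ∫ |k_{uᵢ}|² dH < 1`.
-/

open ComplexConjugate

def mpKernel (u : ℂ) (l : ℝ) : ℂ := l * (1 + l * u)⁻¹

def mpIntegral (H : Measure ℝ) (u : ℂ) : ℂ := ∫ l, mpKernel u l ∂H

section Kernel

variable {u u₁ u₂ : ℂ}

lemma one_add_ofReal_mul_ne_zero (hu : u.im ≠ 0) (l : ℝ) : 1 + l * u ≠ 0 := by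
  intro h
  have him := congrArg Complex.im h
  have hre := congrArg Complex.re h
  simp only [add_im, one_im, im_ofReal_mul, zero_add, zero_im, mul_eq_zero] at him
  rcases him with rfl | him
  · simp at hre
  · exact hu him

lemma norm_mpKernel_le (hu : u.im ≠ 0) (l : ℝ) : ‖mpKernel u l‖ ≤ |u.im|⁻¹ := by
  rcases eq_or_ne l 0 with rfl | hl
  · simp [mpKernel]
  rw [mpKernel, norm_mul, norm_inv, Complex.norm_real, Real.norm_eq_abs, ← div_eq_mul_inv,
    div_le_iff₀ (norm_pos_iff.2 (one_add_ofReal_mul_ne_zero hu l))]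
  calc |l| = |u.im|⁻¹ * |(1 + l * u).im| := by
        rw [show (1 + l * u).im = l * u.im by simp, abs_mul]
        field_simp
    _ ≤ |u.im|⁻¹ * ‖1 + l * u‖ := by gcongr; exact abs_im_le_norm _

lemma im_mpKernel (u : ℂ) (l : ℝ) : (mpKernel u l).im = -u.im * ‖mpKernel u l‖ ^ 2 := by
  rw [mpKernel, Complex.sq_norm]
  simp only [mul_im, ofReal_re, inv_im, add_im, one_im, ofReal_im, zero_mul, add_zero, zero_add,
    inv_re, add_re, one_re, mul_re, sub_zero, normSq_mul, normSq_ofReal, map_inv₀, neg_mul]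
  ring

lemma mpKernel_sub (hu₁ : u₁.im ≠ 0) (hu₂ : u₂.im ≠ 0) (l : ℝ) :
    mpKernel u₁ l - mpKernel u₂ l = (u₂ - u₁) * (mpKernel u₁ l * mpKernel u₂ l) := by
  have := one_add_ofReal_mul_ne_zero hu₁ l
  have := one_add_ofReal_mul_ne_zero hu₂ l
  simp only [mpKernel]
  field_simp
  ring

lemma inv_one_add_ofReal_mul (hu : u.im ≠ 0) (l : ℝ) : (1 + l * u)⁻¹ = 1 - u * mpKernel u l := by
  have := one_add_ofReal_mul_ne_zero hu l
  simp only [mpKernel]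
  field_simp
  ring

lemma mpKernel_conj (u : ℂ) (l : ℝ) : mpKernel (conj u) l = conj (mpKernel u l) := by
  simp [mpKernel]

@[fun_prop]
lemma measurable_mpKernel (u : ℂ) : Measurable (mpKernel u) := by
  unfold mpKernel; fun_prop

end Kernel

section Integral

variable (H : Measure ℝ) {u u₁ u₂ : ℂ}

lemma mpIntegral_conj (u : ℂ) : mpIntegral H (conj u) = conj (mpIntegral H u) := by
  simp_rw [mpIntegral, mpKernel_conj, integral_conj]

variable [IsFiniteMeasure H]

lemma integrable_mpKernel (hu : u.im ≠ 0) : Integrable (mpKernel u) H :=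
  .of_bound (by fun_prop) _ (ae_of_all _ (norm_mpKernel_le hu))

lemma integrable_norm_mpKernel_sq (hu : u.im ≠ 0) :
    Integrable (fun l => ‖mpKernel u l‖ ^ 2) H :=
  .of_bound (by fun_prop) (|u.im|⁻¹ ^ 2) (ae_of_all _ fun l => by
    rw [Real.norm_of_nonneg (by positivity)]
    exact pow_le_pow_left₀ (norm_nonneg _) (norm_mpKernel_le hu l) 2)

lemma integrable_mpKernel_mul (hu₁ : u₁.im ≠ 0) (hu₂ : u₂.im ≠ 0) :
    Integrable (fun l => mpKernel u₁ l * mpKernel u₂ l) H :=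
  (integrable_mpKernel H hu₂).bdd_mul (by fun_prop) (ae_of_all _ (norm_mpKernel_le hu₁))

lemma integral_inv_one_add_ofReal_mul [IsProbabilityMeasure H] (hu : u.im ≠ 0) :
    ∫ l, (1 + l * u)⁻¹ ∂H = 1 - u * mpIntegral H u := by
  simp_rw [inv_one_add_ofReal_mul hu]
  rw [integral_sub (integrable_const 1) ((integrable_mpKernel H hu).const_mul u),
    integral_const_mul, mpIntegral]
  simp

lemma im_mpIntegral (hu : u.im ≠ 0) :
    (mpIntegral H u).im = -u.im * ∫ l, ‖mpKernel u l‖ ^ 2 ∂H := by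
  rw [← integral_const_mul]
  simp_rw [← im_mpKernel]
  exact (integral_im (integrable_mpKernel H hu)).symm

lemma mpIntegral_sub (hu₁ : u₁.im ≠ 0) (hu₂ : u₂.im ≠ 0) :
    mpIntegral H u₁ - mpIntegral H u₂ = (u₂ - u₁) * ∫ l, mpKernel u₁ l * mpKernel u₂ l ∂H := by
  rw [mpIntegral, mpIntegral,
    ← integral_sub (integrable_mpKernel H hu₁) (integrable_mpKernel H hu₂), ← integral_const_mul]
  simp_rw [mpKernel_sub hu₁ hu₂]

lemma norm_mul_mul_integral_mpKernel_mul_le (hu₁ : u₁.im ≠ 0) (hu₂ : u₂.im ≠ 0) :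
    ‖u₁ * u₂ * ∫ l, mpKernel u₁ l * mpKernel u₂ l ∂H‖ ≤
      (‖u₁‖ ^ 2 * ∫ l, ‖mpKernel u₁ l‖ ^ 2 ∂H + ‖u₂‖ ^ 2 * ∫ l, ‖mpKernel u₂ l‖ ^ 2 ∂H) / 2 := by
  set a := fun l => ‖u₁‖ * ‖mpKernel u₁ l‖
  set b := fun l => ‖u₂‖ * ‖mpKernel u₂ l‖
  have ha : Integrable (fun l => a l ^ 2) H := by
    simpa only [a, mul_pow] using (integrable_norm_mpKernel_sq H hu₁).const_mul (‖u₁‖ ^ 2)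
  have hb : Integrable (fun l => b l ^ 2) H := by
    simpa only [b, mul_pow] using (integrable_norm_mpKernel_sq H hu₂).const_mul (‖u₂‖ ^ 2)
  calc ‖u₁ * u₂ * ∫ l, mpKernel u₁ l * mpKernel u₂ l ∂H‖
      ≤ ∫ l, a l * b l ∂H := by
        rw [← integral_const_mul]
        refine (norm_integral_le_integral_norm _).trans_eq ?_
        congr 1 with l
        simp only [a, b, norm_mul]
        ring
    _ ≤ ∫ l, (a l ^ 2 + b l ^ 2) / 2 ∂H := by
        refine integral_mono ?_ ?_ fun l => by nlinarith [sq_nonneg (a l - b l)]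
        · exact ((integrable_mpKernel_mul H hu₁ hu₂).norm.const_mul (‖u₁‖ * ‖u₂‖)).congr
            (ae_of_all _ fun l => by simp only [a, b, norm_mul]; ring)
        · exact (ha.add hb).div_const 2
    _ = _ := by
        rw [integral_div, integral_add ha hb]
        simp only [a, b, mul_pow, integral_const_mul]

end Integral

section InverseFormula

variable (H : Measure ℝ) [IsFiniteMeasure H] {c : ℝ} {z u z₁ z₂ u₁ u₂ : ℂ}

lemma mul_norm_sq_mul_integral_lt_one (hu : u.im ≠ 0) (hz : z = -u⁻¹ + c * mpIntegral H u)
    (hsign : 0 < z.im * u.im) : c * (‖u‖ ^ 2 * ∫ l, ‖mpKernel u l‖ ^ 2 ∂H) < 1 := by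
  set G := ∫ l, ‖mpKernel u l‖ ^ 2 ∂H
  have hu0 : ‖u‖ ≠ 0 := norm_ne_zero_iff.2 fun h => hu (by simp [h])
  have him : z.im * ‖u‖ ^ 2 = u.im * (1 - c * (‖u‖ ^ 2 * G)) := by
    rw [hz, add_im, neg_im, inv_im, im_ofReal_mul, im_mpIntegral H hu, ← Complex.sq_norm]
    field_simp
    ring
  have key : 0 < u.im ^ 2 * (1 - c * (‖u‖ ^ 2 * G)) :=
    calc 0 < z.im * u.im * ‖u‖ ^ 2 := mul_pos hsign (by positivity)
      _ = u.im ^ 2 * (1 - c * (‖u‖ ^ 2 * G)) := by linear_combination u.im * him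
  linarith [pos_of_mul_pos_right key (sq_nonneg _)]

lemma sub_eq_inv_sub_mul (hu₁ : u₁.im ≠ 0) (hu₂ : u₂.im ≠ 0)
    (hz₁ : z₁ = -u₁⁻¹ + c * mpIntegral H u₁) (hz₂ : z₂ = -u₂⁻¹ + c * mpIntegral H u₂) :
    z₁ - z₂ = (u₂⁻¹ - u₁⁻¹) * (1 - c * (u₁ * u₂ * ∫ l, mpKernel u₁ l * mpKernel u₂ l ∂H)) := by
  have h₁ : u₁ ≠ 0 := fun h => hu₁ (by simp [h])
  have h₂ : u₂ ≠ 0 := fun h => hu₂ (by simp [h])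
  rw [hz₁, hz₂]
  field_simp
  linear_combination (c : ℂ) * u₁ * u₂ * mpIntegral_sub H hu₁ hu₂

lemma norm_sub_div_two_le (hc : 0 ≤ c) (hu₁ : u₁.im ≠ 0) (hu₂ : u₂.im ≠ 0)
    (hz₁ : z₁ = -u₁⁻¹ + c * mpIntegral H u₁) (hz₂ : z₂ = -u₂⁻¹ + c * mpIntegral H u₂)
    (hsign₁ : 0 < z₁.im * u₁.im) (hsign₂ : 0 < z₂.im * u₂.im) :
    ‖z₁ - z₂‖ / 2 ≤ ‖u₂⁻¹ - u₁⁻¹‖ := by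
  set J := u₁ * u₂ * ∫ l, mpKernel u₁ l * mpKernel u₂ l ∂H
  have hJ : c * ‖J‖ < 1 := by
    have := mul_le_mul_of_nonneg_left (norm_mul_mul_integral_mpKernel_mul_le H hu₁ hu₂) hc
    linarith [mul_norm_sq_mul_integral_lt_one H hu₁ hz₁ hsign₁,
      mul_norm_sq_mul_integral_lt_one H hu₂ hz₂ hsign₂]
  have hfactor : ‖1 - c * J‖ ≤ 2 :=
    calc ‖1 - c * J‖ ≤ ‖(1 : ℂ)‖ + ‖(c : ℂ) * J‖ := norm_sub_le _ _
      _ ≤ 2 := by rw [norm_one, norm_mul, norm_real, Real.norm_of_nonneg hc]; linarith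
  rw [sub_eq_inv_sub_mul H hu₁ hu₂ hz₁ hz₂, norm_mul, div_le_iff₀ two_pos]
  exact mul_le_mul_of_nonneg_left hfactor (norm_nonneg _)

end InverseFormula

lemma St_conj (μ : Measure ℝ) (z : ℂ) : St μ (conj z) = conj (St μ z) := by
  simp_rw [St, ← integral_conj, map_inv₀, map_sub, conj_ofReal]

lemma sUnder_conj (ν : Measure ℝ) (c : ℝ) (z : ℂ) :
    sUnder ν c (conj z) = conj (sUnder ν c z) := by
  simp [sUnder, St_conj]

namespace MPRel

variable {H ν : Measure ℝ} {c : ℝ} {z : ℂ}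

lemma im_mul_im_sUnder_pos (hMP : MPRel H c ν) (hz : z.im ≠ 0) :
    0 < z.im * (sUnder ν c z).im := by
  obtain ⟨-, -, -, -, -, -, -, -, -, hrel⟩ := hMP
  have upper : ∀ z : ℂ, 0 < z.im → 0 < (sUnder ν c z).im := fun z hz => by
    simpa [sUnder, sub_eq_add_neg, ← neg_div] using (hrel z hz).2
  rcases hz.lt_or_gt with hneg | hpos
  · have := upper (conj z) (by simpa using hneg)
    rw [sUnder_conj, conj_im] at this
    nlinarith
  · exact mul_pos hpos (upper z hpos)

lemma im_sUnder_ne_zero (hMP : MPRel H c ν) (hz : z.im ≠ 0) : (sUnder ν c z).im ≠ 0 := by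
  intro h
  simpa [h] using hMP.im_mul_im_sUnder_pos hz

lemma eq_neg_inv_add_mpIntegral_of_im_pos (hMP : MPRel H c ν) (hz : 0 < z.im) :
    z = -(sUnder ν c z)⁻¹ + c * mpIntegral H (sUnder ν c z) := by
  have hu := hMP.im_sUnder_ne_zero hz.ne'
  obtain ⟨hH, -, -, -, -, -, -, -, -, hrel⟩ := hMP
  replace hrel := (hrel z hz).1
  have hz0 : z ≠ 0 := fun h => by simp [h] at hz
  have hu0 : sUnder ν c z ≠ 0 := fun h => hu (by simp [h])
  have hden : ∀ l : ℝ, (l : ℂ) * (1 - c * z * St ν z - c) - z = -z * (1 + l * sUnder ν c z) := by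
    intro l
    rw [sUnder]
    field_simp
    ring
  simp_rw [hden, mul_inv, integral_const_mul, integral_inv_one_add_ofReal_mul H hu] at hrel
  have hu_def : sUnder ν c z = c * St ν z - (1 - c) / z := rfl
  rw [hrel] at hu_def
  field_simp at hu_def ⊢
  linear_combination hu_def

lemma eq_neg_inv_add_mpIntegral (hMP : MPRel H c ν) (hz : z.im ≠ 0) :
    z = -(sUnder ν c z)⁻¹ + c * mpIntegral H (sUnder ν c z) := by
  rcases hz.lt_or_gt with hneg | hpos
  · have := hMP.eq_neg_inv_add_mpIntegral_of_im_pos (z := conj z) (by simpa using hneg)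
    simpa [sUnder_conj, mpIntegral_conj] using congrArg conj this
  · exact hMP.eq_neg_inv_add_mpIntegral_of_im_pos hpos

end MPRel

theorem stmt15 (H ν : MeasureTheory.Measure ℝ) (c : ℝ) (hMP : MPRel H c ν) :
    (∀ z : ℂ, z.im ≠ 0 → sUnder ν c z ≠ 0) ∧
    ∀ z₁ z₂ : ℂ, z₁.im ≠ 0 → z₂.im ≠ 0 →
      ‖z₁ - z₂‖ / 2 ≤ ‖phiInv ν c z₁ - phiInv ν c z₂‖ := by
  have hH : IsProbabilityMeasure H := hMP.1
  have hc : 0 < c := hMP.2.2.2.2.1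
  refine ⟨fun z hz h => hMP.im_sUnder_ne_zero hz (by simp [h]), fun z₁ z₂ h₁ h₂ => ?_⟩
  have hphi : phiInv ν c z₁ - phiInv ν c z₂ = (sUnder ν c z₂)⁻¹ - (sUnder ν c z₁)⁻¹ := by
    simp only [phiInv]
    ring
  rw [hphi]
  exact norm_sub_div_two_le H hc.le (hMP.im_sUnder_ne_zero h₁)
    (hMP.im_sUnder_ne_zero h₂) (hMP.eq_neg_inv_add_mpIntegral h₁)
    (hMP.eq_neg_inv_add_mpIntegral h₂) (hMP.im_mul_im_sUnder_pos h₁) (hMP.im_mul_im_sUnder_pos h₂)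
end
end
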